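/- arXiv:math/0609098 — 7 statements merged into one kernel-verified Lean document; each statement's English description precedes it below -/
import Mathlib

section
/- If X is a topological space that is locally Hausdorff, then for each point x ∈ X there exists a dense open subset U of X containing x such that U with the subspace topology is Hausdorff. -/
/-!
By Zorn's lemma, a Hausdorff open neighbourhood of `x` extends to a maximal one `M` (the union of a
chain of Hausdorff open sets is Hausdorff, as any two of its points lie in one member). If `M` were
not dense, a Hausdorff open neighbourhood of a point outside `closure M`, shrunk to miss
`closure M`, could be adjoined to `M`, contradicting maximality. An open set is Hausdorff exactly
when its points have pairwise disjoint neighbourhood filters in `X`, which is the form in which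
unions are handled.
-/

open Set Filter Topology

section

variable {X : Type*} [TopologicalSpace X]

theorem IsOpen.t2Space_iff_pairwise_disjoint_nhds {U : Set X} (hU : IsOpen U) :
    T2Space U ↔ U.Pairwise fun a b ↦ Disjoint (𝓝 a) (𝓝 b) := by
  rw [t2Space_iff_disjoint_nhds, ← pairwise_subtype_iff_pairwise_set]
  refine forall₂_congr fun a b ↦ imp_congr_right fun _ ↦ ?_
  dsimp only
  rw [← disjoint_map Subtype.val_injective, hU.isOpenEmbedding_subtypeVal.map_nhds_eq,
    hU.isOpenEmbedding_subtypeVal.map_nhds_eq]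

theorem Set.Pairwise.union_of_isOpen_of_disjoint {s t : Set X}
    (hs : s.Pairwise fun a b ↦ Disjoint (𝓝 a) (𝓝 b))
    (ht : t.Pairwise fun a b ↦ Disjoint (𝓝 a) (𝓝 b))
    (hso : IsOpen s) (hto : IsOpen t) (hst : Disjoint s t) :
    (s ∪ t).Pairwise fun a b ↦ Disjoint (𝓝 a) (𝓝 b) := by
  refine pairwise_union.2 ⟨hs, ht, fun a ha b hb _ ↦ ⟨?_, ?_⟩⟩
  · exact disjoint_of_disjoint_of_mem hst (hso.mem_nhds ha) (hto.mem_nhds hb)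
  · exact disjoint_of_disjoint_of_mem hst.symm (hto.mem_nhds hb) (hso.mem_nhds ha)

theorem exists_maximal_isOpen_pairwise_disjoint_nhds_superset {U : Set X} (hU : IsOpen U)
    (hU₂ : U.Pairwise fun a b ↦ Disjoint (𝓝 a) (𝓝 b)) :
    ∃ M, U ⊆ M ∧ Maximal
      (fun V : Set X ↦ IsOpen V ∧ V.Pairwise fun a b ↦ Disjoint (𝓝 a) (𝓝 b)) M := by
  refine zorn_subset_nonempty {V | IsOpen V ∧ V.Pairwise fun a b ↦ Disjoint (𝓝 a) (𝓝 b)}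
    (fun c hcS hc _ ↦ ⟨⋃₀ c, ⟨?_, ?_⟩, fun _ ↦ subset_sUnion_of_mem⟩)
    U ⟨hU, hU₂⟩
  · exact isOpen_sUnion fun V hV ↦ (hcS hV).1
  · exact (pairwise_sUnion hc.directedOn).2 fun V hV ↦ (hcS hV).2

theorem Maximal.dense_of_forall_exists_t2Space {M : Set X}
    (hloc : ∀ x : X, ∃ U : Set X, IsOpen U ∧ x ∈ U ∧ T2Space U)
    (hM : Maximal
      (fun V : Set X ↦ IsOpen V ∧ V.Pairwise fun a b ↦ Disjoint (𝓝 a) (𝓝 b)) M) :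
    Dense M := by
  refine dense_iff_closure_eq.2 <| eq_univ_of_forall fun y ↦ by_contra fun hy ↦ ?_
  obtain ⟨N, hNo, hyN, hN₂⟩ := hloc y
  have hN'o : IsOpen (N ∩ (closure M)ᶜ) := hNo.inter isClosed_closure.isOpen_compl
  have hN'₂ : (N ∩ (closure M)ᶜ).Pairwise fun a b ↦ Disjoint (𝓝 a) (𝓝 b) :=
    (hNo.t2Space_iff_pairwise_disjoint_nhds.1 hN₂).mono inter_subset_left
  have hMN' : Disjoint M (N ∩ (closure M)ᶜ) :=
    (disjoint_compl_right.mono_left subset_closure).mono_right inter_subset_right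
  have hsub : M ∪ (N ∩ (closure M)ᶜ) ⊆ M :=
    hM.2 ⟨hM.1.1.union hN'o, hM.1.2.union_of_isOpen_of_disjoint hN'₂ hM.1.1 hN'o hMN'⟩
      subset_union_left
  exact hy (subset_closure (hsub (Or.inr ⟨hyN, hy⟩)))

end

theorem locallyHausdorff_exists_dense_open_hausdorff
    {X : Type*} [TopologicalSpace X]
    (hloc : ∀ x : X, ∃ U : Set X, IsOpen U ∧ x ∈ U ∧ T2Space U) :
    ∀ x : X, ∃ U : Set X, IsOpen U ∧ Dense U ∧ x ∈ U ∧ T2Space U := by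
  intro x
  obtain ⟨U, hUo, hxU, hU₂⟩ := hloc x
  obtain ⟨M, hUM, hM⟩ := exists_maximal_isOpen_pairwise_disjoint_nhds_superset hUo
    (hUo.t2Space_iff_pairwise_disjoint_nhds.1 hU₂)
  exact ⟨M, hM.1.1, hM.dense_of_forall_exists_t2Space hloc, hUM hxU,
    hM.1.1.t2Space_iff_pairwise_disjoint_nhds.2 hM.1.2⟩
end

section
/- Every topological space that is homogeneous, Lindelöf, locally Hausdorff, and a Baire space is Hausdorff. -/
/-!
If `X` is not Hausdorff, homogeneity gives every point `x` a point `y ≠ x` whose neighbourhood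
filter meets that of `x`. Cover `X` by countably many open Hausdorff sets `Uᵢ` (Lindelöf) and pick
`Uᵢ ∋ y`: then `x ∈ closure Uᵢ`, and `x ∉ Uᵢ` because `Uᵢ` is Hausdorff, so `x ∈ frontier Uᵢ`.
Thus `X` is the countable union of the frontiers of open sets, which are nowhere dense,
contradicting the Baire property.
-/

open Set Filter Topology

section

variable {X : Type*} [TopologicalSpace X]

theorem IsOpen.isNowhereDense_frontier {U : Set X} (hU : IsOpen U) :
    IsNowhereDense (frontier U) := by
  rw [isClosed_frontier.isNowhereDense_iff, ← frontier_compl]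
  exact interior_frontier hU.isClosed_compl

theorem IsOpen.disjoint_nhds_nhds_of_t2Space {U : Set X} (hU : IsOpen U) [T2Space U]
    {x y : X} (hx : x ∈ U) (hy : y ∈ U) (hxy : x ≠ y) : Disjoint (𝓝 x) (𝓝 y) := by
  have hne : (⟨x, hx⟩ : U) ≠ ⟨y, hy⟩ := fun h => hxy (congrArg Subtype.val h)
  have := (disjoint_map Subtype.val_injective).2 (disjoint_nhds_nhds.2 hne)
  rwa [hU.isOpenEmbedding_subtypeVal.map_nhds_eq, hU.isOpenEmbedding_subtypeVal.map_nhds_eq] at this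

theorem mem_closure_of_not_disjoint_nhds {U : Set X} {x y : X} (hy : U ∈ 𝓝 y)
    (hxy : ¬Disjoint (𝓝 x) (𝓝 y)) : x ∈ closure U :=
  mem_closure_iff_clusterPt.2 <| clusterPt_iff_not_disjoint.2 fun h =>
    hxy (h.mono_right (le_principal_iff.2 hy))

theorem IsOpen.mem_frontier_of_not_disjoint_nhds {U : Set X} (hU : IsOpen U) [T2Space U]
    {x y : X} (hy : y ∈ U) (hxy : x ≠ y) (hnd : ¬Disjoint (𝓝 x) (𝓝 y)) : x ∈ frontier U := by
  rw [hU.frontier_eq]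
  exact ⟨mem_closure_of_not_disjoint_nhds (hU.mem_nhds hy) hnd,
    fun hx => hnd (hU.disjoint_nhds_nhds_of_t2Space hx hy hxy)⟩

theorem isMeagre_setOf_exists_ne_not_disjoint_nhds {ι : Type*} [Countable ι] {U : ι → Set X}
    (hU : ∀ i, IsOpen (U i)) [∀ i, T2Space (U i)] (hcov : ⋃ i, U i = univ) :
    IsMeagre {x : X | ∃ y, x ≠ y ∧ ¬Disjoint (𝓝 x) (𝓝 y)} := by
  refine (isMeagre_iUnion fun i => (hU i).isNowhereDense_frontier.isMeagre).mono ?_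
  rintro x ⟨y, hxy, hnd⟩
  obtain ⟨i, hyi⟩ := iUnion_eq_univ_iff.1 hcov y
  exact mem_iUnion.2 ⟨i, (hU i).mem_frontier_of_not_disjoint_nhds hyi hxy hnd⟩

theorem exists_ne_not_disjoint_nhds_of_not_t2Space (hhom : ∀ x y : X, ∃ h : X ≃ₜ X, h x = y)
    (hX : ¬T2Space X) (x : X) : ∃ y, x ≠ y ∧ ¬Disjoint (𝓝 x) (𝓝 y) := by
  obtain ⟨a, b, hab, hnd⟩ : ∃ a b : X, a ≠ b ∧ ¬Disjoint (𝓝 a) (𝓝 b) := by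
    simpa [t2Space_iff_disjoint_nhds, Pairwise] using hX
  obtain ⟨h, rfl⟩ := hhom a x
  refine ⟨h b, h.injective.ne hab, ?_⟩
  rwa [← h.map_nhds_eq, ← h.map_nhds_eq, disjoint_map h.injective]

end

theorem homogeneous_lindelof_locallyHausdorff_baire_t2
    {X : Type*} [TopologicalSpace X]
    (hhom : ∀ x y : X, ∃ h : X ≃ₜ X, h x = y)
    (hlin : LindelofSpace X)
    (hloc : ∀ x : X, ∃ U : Set X, IsOpen U ∧ x ∈ U ∧ T2Space U)
    (hbaire : BaireSpace X) :
    T2Space X := by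
  by_contra hX
  choose U hUo hxU hU2 using hloc
  obtain ⟨r, hr, hrcov⟩ := hlin.isLindelof_univ.elim_countable_subcover U hUo
    fun x _ => mem_iUnion.2 ⟨x, hxU x⟩
  have := hr.to_subtype
  have hcov : ⋃ i : r, U i = univ := by
    rwa [iUnion_subtype, ← univ_subset_iff]
  have hmeagre := isMeagre_setOf_exists_ne_not_disjoint_nhds (fun i : r => hUo i) hcov
  have : Nonempty X := not_isEmpty_iff.1 fun _ => hX inferInstance
  exact not_isMeagre_of_isOpen isOpen_univ univ_nonempty
    (hmeagre.mono fun x _ => exists_ne_not_disjoint_nhds_of_not_t2Space hhom hX x)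
end

section
/- Every homogeneous Lindelöf topological manifold (locally homeomorphic to ℝⁿ, not assumed Hausdorff) is Hausdorff. -/
open TopologicalSpace Filter Set Topology

theorem homogeneous_lindelof_manifold_t2
    {X : Type*} [TopologicalSpace X] (n : ℕ)
    (hman : ∀ x : X, ∃ U : Set X, IsOpen U ∧ x ∈ U ∧ Nonempty (U ≃ₜ (Fin n → ℝ)))
    (hhom : ∀ x y : X, ∃ h : X ≃ₜ X, h x = y)
    (hlin : LindelofSpace X) :
    T2Space X := by
  by_contra hT2
  -- there is an inseparable pair
  have hpair : ∃ a b : X, a ≠ b ∧ (𝓝 a ⊓ 𝓝 b).NeBot := by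
    by_contra hcon
    push_neg at hcon
    refine hT2 (t2_iff_nhds.mpr ?_)
    intro x y h
    by_contra hxy
    exact h.ne (hcon x y hxy)
  obtain ⟨a, b, hab, hne⟩ := hpair
  -- charts
  choose U hUopen hmemU hchart using hman
  -- second countability
  have hsc2 : ∀ x : X, SecondCountableTopology (U x) := fun x =>
    ((hchart x).some.isEmbedding).secondCountableTopology
  obtain ⟨t, htc, htcover⟩ := hlin.isLindelof_univ.elim_countable_subcover U hUopen
    (fun x _ => mem_iUnion.mpr ⟨x, hmemU x⟩)
  haveI : Countable t := htc.to_subtype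
  haveI : ∀ i : t, SecondCountableTopology (U i.1) := fun i => hsc2 i.1
  haveI hsc : SecondCountableTopology X := by
    refine secondCountableTopology_of_countable_cover (U := fun i : t => U i.1)
      (fun i => hUopen i.1) ?_
    apply eq_univ_of_univ_subset
    intro x hx
    obtain ⟨s, hs⟩ := mem_iUnion.mp (htcover hx)
    simp only [mem_iUnion] at hs
    obtain ⟨hst, hxs⟩ := hs
    exact mem_iUnion.mpr ⟨⟨s, hst⟩, hxs⟩
  -- every point is inseparable from some other point (homogeneity)
  have hbad : ∀ z : X, ∃ y : X, y ≠ z ∧ (𝓝 z ⊓ 𝓝 y).NeBot := by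
    intro z
    obtain ⟨h, hha⟩ := hhom a z
    refine ⟨h b, fun hc => hab ?_, ?_⟩
    · apply h.injective
      rw [hha, hc]
    · have : (𝓝 (h a) ⊓ 𝓝 (h b)).NeBot := by
        rw [← h.map_nhds_eq, ← h.map_nhds_eq, ← Filter.map_inf h.injective]
        exact hne.map h
      rwa [hha] at this
  -- weak T1 separation: an open set containing y but not z
  have hT1 : ∀ z y : X, y ≠ z → ∃ W : Set X, IsOpen W ∧ y ∈ W ∧ z ∉ W := by
    intro z y hyz
    by_cases hz : z ∈ U y
    · haveI : T2Space (U y) := (hchart y).some.isEmbedding.t2Space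
      haveI : T1Space (U y) := inferInstance
      have hopen : IsOpen ({(⟨z, hz⟩ : U y)}ᶜ : Set (U y)) := isOpen_compl_singleton
      refine ⟨Subtype.val '' ({(⟨z, hz⟩ : U y)}ᶜ : Set (U y)),
        (hUopen y).isOpenMap_subtype_val _ hopen, ⟨⟨y, hmemU y⟩, ?_, rfl⟩, ?_⟩
      · simp only [mem_compl_iff, mem_singleton_iff]
        intro hcontra
        exact hyz (congrArg Subtype.val hcontra)
      · rintro ⟨w, hw, hwz⟩
        apply hw
        exact Subtype.ext hwz
    · exact ⟨U y, hUopen y, hmemU y, hz⟩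
  -- every point lies in the boundary of some basic open set
  have hcover : ∀ z : X, ∃ B ∈ countableBasis X, z ∈ closure B \ B := by
    intro z
    obtain ⟨y, hyz, hzy⟩ := hbad z
    obtain ⟨W, hWopen, hyW, hzW⟩ := hT1 z y hyz
    obtain ⟨B, hBbasis, hyB, hBW⟩ :=
      (isBasis_countableBasis X).exists_subset_of_mem_open hyW hWopen
    refine ⟨B, hBbasis, ?_, fun hzB => hzW (hBW hzB)⟩
    rw [mem_closure_iff_nhds]
    intro s hs
    have hBnhds : B ∈ 𝓝 y := (isOpen_of_mem_countableBasis hBbasis).mem_nhds hyB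
    exact hzy.nonempty_of_mem (inter_mem_inf hs hBnhds)
  -- Baire category argument inside the chart around `a`
  set V : Set X := U a with hV
  have hVopen : IsOpen V := hUopen a
  let e : V ≃ₜ (Fin n → ℝ) := (hchart a).some
  let f : countableBasis X → Set (Fin n → ℝ) :=
    fun B => e '' (Subtype.val ⁻¹' (closure B.1 \ B.1))
  haveI : Countable (countableBasis X) := (countable_countableBasis X).to_subtype
  have hfc : ∀ B : countableBasis X, IsClosed (f B) := by
    intro B
    have h1 : IsClosed (closure B.1 \ B.1) :=
      isClosed_closure.sdiff (isOpen_of_mem_countableBasis B.2)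
    exact e.isClosedMap _ (h1.preimage continuous_subtype_val)
  have hfu : ⋃ B : countableBasis X, f B = univ := by
    apply eq_univ_of_forall
    intro p
    obtain ⟨B, hB, hzB⟩ := hcover ((e.symm p : V) : X)
    refine mem_iUnion.mpr ⟨⟨B, hB⟩, ⟨e.symm p, hzB, e.apply_symm_apply p⟩⟩
  obtain ⟨B, hBint⟩ := nonempty_interior_of_iUnion_of_closed hfc hfu
  -- derive the contradiction: the boundary of an open set has empty interior
  have hopen2 : IsOpen (Subtype.val '' (e.symm '' interior (f B))) :=
    hVopen.isOpenMap_subtype_val _ (e.symm.isOpenMap _ isOpen_interior)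
  have hsub : Subtype.val '' (e.symm '' interior (f B)) ⊆ closure B.1 \ B.1 := by
    rintro x ⟨w, ⟨q, hq, hqw⟩, rfl⟩
    have : w ∈ Subtype.val ⁻¹' (closure B.1 \ B.1) := by
      have := interior_subset hq
      obtain ⟨u, hu, hue⟩ := this
      rwa [← hqw, ← hue, e.symm_apply_apply]
    exact this
  obtain ⟨q, hq⟩ := hBint
  set x : X := ((e.symm q : V) : X) with hx
  have hxmem : x ∈ Subtype.val '' (e.symm '' interior (f B)) :=
    ⟨e.symm q, ⟨q, hq, rfl⟩, rfl⟩
  have hxcl : x ∈ closure B.1 := (hsub hxmem).1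
  rw [mem_closure_iff] at hxcl
  obtain ⟨w, hw⟩ := hxcl _ hopen2 hxmem
  exact (hsub hw.1).2 hw.2
end

section
/- Let X be a topological space in which every point has a compact Hausdorff neighborhood. Then for every point x ∈ X and every neighborhood V of x, there exists a compact Hausdorff neighborhood U of x with U ⊆ V (i.e., X is microcompact). -/
/-!
A compact Hausdorff space is locally compact, so inside a compact Hausdorff neighbourhood `K`
of `x` the trace of `V` contains a compact neighbourhood `U` of `x` relative to `K`. Since `K`
is itself a neighbourhood of `x` in `X`, so is `U`, and `U` is Hausdorff as a subspace of `K`.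
-/

open Set Topology

section

variable {X : Type*} [TopologicalSpace X]

theorem t2Space_of_subset {s t : Set X} (hst : s ⊆ t) [T2Space t] : T2Space s :=
  (IsEmbedding.inclusion hst).t2Space

theorem image_val_mem_nhds_of_mem_nhds {s : Set X} {a : s} {t : Set s}
    (hs : s ∈ 𝓝 (a : X)) (ht : t ∈ 𝓝 a) : ((↑) '' t : Set X) ∈ 𝓝 (a : X) := by
  rwa [mem_nhds_subtype_iff_nhdsWithin, nhdsWithin_eq_nhds.2 hs] at ht

theorem IsCompact.exists_isCompact_t2Space_mem_nhds_subset {x : X} {K V : Set X}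
    (hKc : IsCompact K) [T2Space K] (hK : K ∈ 𝓝 x) (hV : V ∈ 𝓝 x) :
    ∃ U ∈ 𝓝 x, U ⊆ V ∧ IsCompact U ∧ T2Space U := by
  have : CompactSpace K := isCompact_iff_compactSpace.1 hKc
  let a : K := ⟨x, mem_of_mem_nhds hK⟩
  have hVa : (↑) ⁻¹' V ∈ 𝓝 a := preimage_coe_mem_nhds_subtype.2 (mem_nhdsWithin_of_mem_nhds hV)
  obtain ⟨U, hU, hUV, hUc⟩ := local_compact_nhds hVa
  exact ⟨(↑) '' U, image_val_mem_nhds_of_mem_nhds hK hU, image_subset_iff.2 hUV,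
    hUc.image continuous_subtype_val, t2Space_of_subset (Subtype.coe_image_subset K U)⟩

end

theorem microcompact_of_locallyCompactHausdorff
    {X : Type*} [TopologicalSpace X]
    (hloc : ∀ x : X, ∃ K ∈ nhds x, IsCompact K ∧ T2Space K) :
    ∀ x : X, ∀ V ∈ nhds x, ∃ U ∈ nhds x, U ⊆ V ∧ IsCompact U ∧ T2Space U := by
  intro x V hV
  obtain ⟨K, hK, hKc, hKt2⟩ := hloc x
  exact hKc.exists_isCompact_t2Space_mem_nhds_subset hK hV
end

section
/- The everywhere doubled line D is homogeneous: for any two points p, q ∈ D there is a homeomorphism of D taking p to q. Indeed such a homeomorphism can be obtained as a composition of translations and exchange maps. -/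
/-!
The preimage of a wave under a translation or an exchange map is again a wave, so these maps are
continuous, and their inverses (a translation, resp. the exchange map itself) are of the same kind.
A translation moves any abscissa to any other, and an exchange map at the target abscissa then
switches the level if needed.
-/

/-- A wave: open set downstairs with a finite subset lifted upstairs. -/
def Wave (O F : Set ℝ) : Set (ℝ × Bool) :=
  ((O \ F) ×ˢ ({false} : Set Bool)) ∪ (F ×ˢ ({true} : Set Bool))

/-- The collection of all waves. -/
def Waves : Set (Set (ℝ × Bool)) :=
  {S | ∃ O F : Set ℝ, IsOpen O ∧ F ⊆ O ∧ F.Finite ∧ S = Wave O F}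

/-- The topology of the everywhere doubled line D on ℝ × Bool. -/
def DTop : TopologicalSpace (ℝ × Bool) := TopologicalSpace.generateFrom Waves

/-- The translation by s. -/
def transl (s : ℝ) : ℝ × Bool → ℝ × Bool := fun p => (p.1 + s, p.2)

/-- The exchange map at abscissa s. -/
noncomputable def exch (s : ℝ) : ℝ × Bool → ℝ × Bool := fun p => if p.1 = s then (p.1, !p.2) else p

open Topology Function
open scoped symmDiff

lemma isHomeomorph_of_continuous_of_involutive {X : Type*} [TopologicalSpace X] {f : X → X}
    (hf : Continuous f) (hinv : Involutive f) : IsHomeomorph f :=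
  isHomeomorph_iff_exists_inverse.2 ⟨hf, f, hinv.leftInverse, hinv.rightInverse, hf⟩

@[simp]
lemma mem_wave {O F : Set ℝ} {x : ℝ} {b : Bool} :
    (x, b) ∈ Wave O F ↔ (x ∈ O ∧ x ∉ F ∧ b = false) ∨ (x ∈ F ∧ b = true) := by
  simp [Wave, and_assoc]

lemma continuous_of_preimage_mem_waves {f : ℝ × Bool → ℝ × Bool}
    (hf : ∀ S ∈ Waves, f ⁻¹' S ∈ Waves) : Continuous[DTop, DTop] f :=
  continuous_generateFrom_iff.2 fun S hS => TopologicalSpace.isOpen_generateFrom_of_mem (hf S hS)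

lemma transl_preimage_wave (s : ℝ) (O F : Set ℝ) :
    transl s ⁻¹' Wave O F = Wave ((· + s) ⁻¹' O) ((· + s) ⁻¹' F) := by
  ext ⟨x, b⟩
  simp [transl]

lemma exch_preimage_wave (u : ℝ) {O F : Set ℝ} (hFO : F ⊆ O) :
    exch u ⁻¹' Wave O F = Wave O (F ∆ ({u} ∩ O)) := by
  have hu : u ∈ F → u ∈ O := @hFO u
  ext ⟨x, b⟩
  rcases eq_or_ne x u with rfl | hx
  · by_cases hF : x ∈ F <;> cases b <;> simp [exch, Set.mem_symmDiff, hF, hu]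
  · simp [exch, hx, Set.mem_symmDiff]

lemma continuous_transl (s : ℝ) : Continuous[DTop, DTop] (transl s) := by
  refine continuous_of_preimage_mem_waves ?_
  rintro _ ⟨O, F, hO, hFO, hF, rfl⟩
  exact ⟨_, _, hO.preimage (continuous_add_const s), Set.preimage_mono hFO,
    hF.preimage (add_left_injective s).injOn, transl_preimage_wave s O F⟩

lemma continuous_exch (u : ℝ) : Continuous[DTop, DTop] (exch u) := by
  refine continuous_of_preimage_mem_waves ?_
  rintro _ ⟨O, F, hO, hFO, hF, rfl⟩
  exact ⟨O, F ∆ ({u} ∩ O), hO,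
    Set.symmDiff_subset_union.trans (Set.union_subset hFO Set.inter_subset_right),
    (hF.union ((Set.finite_singleton u).inter_of_left O)).subset Set.symmDiff_subset_union,
    exch_preimage_wave u hFO⟩

lemma isHomeomorph_transl (s : ℝ) : @IsHomeomorph _ _ DTop DTop (transl s) := by
  refine (@isHomeomorph_iff_exists_inverse _ _ DTop DTop _).2
    ⟨continuous_transl s, transl (-s), fun p => ?_, fun p => ?_, continuous_transl (-s)⟩ <;>
    simp [transl]

lemma exch_involutive (u : ℝ) : Involutive (exch u) := by
  rintro ⟨x, b⟩
  by_cases hx : x = u <;> simp [exch, hx]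

lemma isHomeomorph_exch (u : ℝ) : @IsHomeomorph _ _ DTop DTop (exch u) :=
  @isHomeomorph_of_continuous_of_involutive _ DTop _ (continuous_exch u) (exch_involutive u)

lemma transl_sub_apply (a b : ℝ) (i : Bool) : transl (b - a) (a, i) = (b, i) := by
  simp [transl]

lemma exch_apply_self (u : ℝ) (i : Bool) : exch u (u, i) = (u, !i) := by
  simp [exch]

theorem doubledLine_homogeneous :
    ∀ p q : ℝ × Bool, ∃ f : ℝ × Bool → ℝ × Bool,
      @IsHomeomorph (ℝ × Bool) (ℝ × Bool) DTop DTop f ∧ f p = q ∧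
      ∃ s : ℝ, f = transl s ∨ ∃ u : ℝ, f = exch u ∘ transl s := by
  rintro ⟨a, i⟩ ⟨b, j⟩
  by_cases hij : i = j
  · subst hij
    exact ⟨transl (b - a), isHomeomorph_transl _, transl_sub_apply a b i, b - a, Or.inl rfl⟩
  · refine ⟨exch b ∘ transl (b - a),
      @IsHomeomorph.comp _ _ _ DTop DTop DTop _ _ (isHomeomorph_exch b) (isHomeomorph_transl _),
      ?_, b - a, Or.inr ⟨b, rfl⟩⟩
    rw [comp_apply, transl_sub_apply, exch_apply_self, Bool.not_eq.2 hij]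
end

section
/- The everywhere doubled line D is connected. -/
open Filter Topology Set

section CofiniteNeighbourhoods

variable {X : Type*} [TopologicalSpace X]

theorem isOpen_setOf_mem_nhds_inf_cofinite (A : Set X) : IsOpen {x | A ∈ 𝓝 x ⊓ cofinite} := by
  refine isOpen_iff_mem_nhds.2 fun x hx => ?_
  obtain ⟨O, hO, C, hC, hOC⟩ := mem_inf_iff_superset.1 hx
  filter_upwards [eventually_mem_nhds_iff.2 hO] with y hy
  exact mem_inf_of_inter hy hC hOC

theorem nhds_inf_cofinite_neBot [T1Space X] (x : X) [(𝓝[≠] x).NeBot] :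
    (𝓝 x ⊓ cofinite).NeBot :=
  neBot_of_le (le_inf nhdsWithin_le_nhds (nhdsNE_le_cofinite x))

variable [T1Space X] [∀ x : X, (𝓝[≠] x).NeBot]

theorem isOpen_of_mem_nhds_inf_cofinite {A : Set X} (hA : ∀ x ∈ A, A ∈ 𝓝 x ⊓ cofinite)
    (hAc : ∀ x ∈ Aᶜ, Aᶜ ∈ 𝓝 x ⊓ cofinite) : IsOpen A := by
  convert isOpen_setOf_mem_nhds_inf_cofinite A
  refine subset_antisymm hA fun x hx => by_contra fun hxA => ?_
  have := nhds_inf_cofinite_neBot x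
  simpa using Filter.nonempty_of_mem (inter_mem hx (hAc x hxA))

theorem isClopen_of_mem_nhds_inf_cofinite {A : Set X} (hA : ∀ x ∈ A, A ∈ 𝓝 x ⊓ cofinite)
    (hAc : ∀ x ∈ Aᶜ, Aᶜ ∈ 𝓝 x ⊓ cofinite) : IsClopen A :=
  ⟨isOpen_compl_iff.1 (isOpen_of_mem_nhds_inf_cofinite hAc (by simpa using hA)),
    isOpen_of_mem_nhds_inf_cofinite hA hAc⟩

end CofiniteNeighbourhoods

theorem wave_inter_wave (O₁ F₁ O₂ F₂ : Set ℝ) :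
    Wave O₁ F₁ ∩ Wave O₂ F₂ = Wave ((O₁ ∩ O₂) \ symmDiff F₁ F₂) (F₁ ∩ F₂) := by
  ext ⟨y, b⟩
  cases b
  · simp [Wave, mem_symmDiff]
    tauto
  · simp [Wave, mem_symmDiff]

theorem isTopologicalBasis_waves : @TopologicalSpace.IsTopologicalBasis _ DTop Waves := by
  refine @TopologicalSpace.IsTopologicalBasis.mk _ DTop Waves ?_ ?_ rfl
  · rintro _ ⟨O₁, F₁, hO₁, hF₁O, hF₁, rfl⟩ _ ⟨O₂, F₂, hO₂, hF₂O, hF₂, rfl⟩ p hp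
    rw [wave_inter_wave] at hp ⊢
    refine ⟨_, ⟨_, _, ?_, ?_, hF₁.inter_of_left F₂, rfl⟩, hp, subset_rfl⟩
    · exact (hO₁.inter hO₂).sdiff ((hF₁.union hF₂).subset symmDiff_le_sup).isClosed
    · intro y hy
      simp [mem_symmDiff, hF₁O hy.1, hF₂O hy.2, hy.1, hy.2]
  · refine eq_univ_of_forall fun ⟨y, b⟩ => ?_
    cases b
    · exact ⟨Wave univ ∅, ⟨univ, ∅, isOpen_univ, empty_subset _, finite_empty, rfl⟩, by simp [Wave]⟩
    · exact ⟨Wave univ {y}, ⟨univ, {y}, isOpen_univ, subset_univ _, finite_singleton y, rfl⟩,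
        by simp [Wave]⟩

theorem preimage_mem_nhds_inf_cofinite {w : Set (ℝ × Bool)} (hw : IsOpen[DTop] w) {p : ℝ × Bool}
    (hp : p ∈ w) : (·, false) ⁻¹' w ∈ 𝓝 p.1 ⊓ cofinite := by
  obtain ⟨_, ⟨O, F, hO, hFO, hF, rfl⟩, hpW, hWw⟩ :=
    isTopologicalBasis_waves.exists_subset_of_mem_open (t := DTop) hp hw
  have hpO : p.1 ∈ O := by
    obtain ⟨y, _ | _⟩ := p
    · exact ((by simpa [Wave] using hpW) : y ∈ O \ F).1
    · exact hFO (by simpa [Wave] using hpW)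
  exact mem_inf_of_inter (hO.mem_nhds hpO) hF.compl_mem_cofinite
    fun y hy => hWw (by simpa [Wave] using hy)

theorem eq_empty_of_preimage_eq_empty {w : Set (ℝ × Bool)} (hw : IsOpen[DTop] w)
    (h : (·, false) ⁻¹' w = ∅) : w = ∅ := by
  refine eq_empty_of_forall_notMem fun p hp => ?_
  have := nhds_inf_cofinite_neBot p.1
  simpa [h] using preimage_mem_nhds_inf_cofinite hw hp

theorem doubledLine_connected : @ConnectedSpace (ℝ × Bool) DTop := by
  let _ := DTop
  refine connectedSpace_iff_clopen.2 ⟨⟨(0, false)⟩, fun s hs => ?_⟩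
  have hA : IsClopen ((·, false) ⁻¹' s : Set ℝ) :=
    isClopen_of_mem_nhds_inf_cofinite (fun _ hx => preimage_mem_nhds_inf_cofinite hs.isOpen hx)
      (fun _ hx => preimage_mem_nhds_inf_cofinite hs.compl.isOpen hx)
  rcases isClopen_iff.1 hA with h | h
  · exact .inl (eq_empty_of_preimage_eq_empty hs.isOpen h)
  · refine .inr (compl_empty_iff.1 (eq_empty_of_preimage_eq_empty hs.compl.isOpen ?_))
    rw [preimage_compl, h, compl_univ]
end

section
/- In the complete feather F with its order topology, the two points (s₀,…,sₙ) and (s₀,…,sₙ,sₙ) cannot be separated by disjoint open sets; in particular F is not Hausdorff. -/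
/-- A finite sequence (s₀,…,sₙ) with s₀ < s₁ < ⋯ < s_{n−1} ≤ sₙ, encoded as a list. -/
def IsFeather (l : List ℝ) : Prop :=
  ∃ (init : List ℝ) (a : ℝ), l = init ++ [a] ∧ init.Chain' (· < ·) ∧
    ∀ b ∈ init.getLast?, b ≤ a

/-- The underlying set of the complete feather. -/
def Feather : Type := {l : List ℝ // IsFeather l}

/-- (s₀,…,sₙ) < (t₀,…,t_m) iff n ≤ m, sᵢ = tᵢ for i < n, and sₙ < tₙ. -/
def flt (s t : List ℝ) : Prop :=
  s.length ≤ t.length ∧ s.dropLast = t.take (s.length - 1) ∧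
    s.getD (s.length - 1) 0 < t.getD (s.length - 1) 0

instance : LT Feather := ⟨fun s t => flt s.val t.val⟩

/-- The order topology on the feather, generated by the open intervals. -/
def featherTop : TopologicalSpace Feather :=
  TopologicalSpace.generateFrom {S | ∃ a b : Feather, S = {x | a < x ∧ x < b}}

lemma getD_concat_self (m : List ℝ) (x : ℝ) : (m ++ [x]).getD m.length 0 = x := by
  simp [List.getD_eq_getElem?_getD, List.getElem?_append_right]

lemma getD_concat_lt (m : List ℝ) (x : ℝ) {k : ℕ} (hk : k < m.length) :
    (m ++ [x]).getD k 0 = m.getD k 0 := by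
  simp [List.getD_eq_getElem?_getD, List.getElem?_append_left hk]

lemma take_concat_le (m : List ℝ) (x : ℝ) {k : ℕ} (hk : k ≤ m.length) :
    (m ++ [x]).take k = m.take k := by
  rw [List.take_append, Nat.sub_eq_zero_of_le hk, List.take_zero, List.append_nil]

lemma flt_concat_iff (m : List ℝ) (x : ℝ) (t : List ℝ) :
    flt (m ++ [x]) t ↔ m.length < t.length ∧ t.take m.length = m ∧ x < t.getD m.length 0 := by
  unfold flt
  simp only [List.length_append, List.length_singleton, Nat.add_sub_cancel,
    List.dropLast_concat, getD_concat_self, Nat.succ_le_iff, eq_comm]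

lemma interval_p (P : List ℝ) (a : ℝ) (c b : List ℝ) (hcF : IsFeather c)
    (h1 : flt c (P ++ [a])) (h2 : flt (P ++ [a]) b) :
    ∃ L, L < a ∧ ∀ w, L < w → w < a → flt c (P ++ [w]) ∧ flt (P ++ [w]) b := by
  obtain ⟨C, γ, rfl, -, -⟩ := hcF
  rw [flt_concat_iff] at h1
  rw [flt_concat_iff] at h2
  obtain ⟨hl1, ht1, hg1⟩ := h1
  obtain ⟨hl2, ht2, hg2⟩ := h2
  have hCP : C.length ≤ P.length := by
    simpa [Nat.lt_succ_iff] using hl1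
  have hlen : ∀ w : ℝ, C.length < (P ++ [w]).length := by
    intro w; simpa [Nat.lt_succ_iff] using hCP
  have htake : ∀ w : ℝ, (P ++ [w]).take C.length = C := by
    intro w
    rw [take_concat_le P w hCP, ← take_concat_le P a hCP, ht1]
  have hsecond : ∀ w, w < a → flt (P ++ [w]) b := by
    intro w hw
    rw [flt_concat_iff]
    exact ⟨hl2, ht2, hw.trans hg2⟩
  rcases eq_or_lt_of_le hCP with heq | hlt
  · refine ⟨γ, ?_, fun w hw1 hw2 => ⟨?_, hsecond w hw2⟩⟩
    · rw [heq, getD_concat_self] at hg1; exact hg1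
    · rw [flt_concat_iff]
      refine ⟨hlen w, htake w, ?_⟩
      rw [heq, getD_concat_self]; exact hw1
  · refine ⟨a - 1, by linarith, fun w hw1 hw2 => ⟨?_, hsecond w hw2⟩⟩
    rw [flt_concat_iff]
    refine ⟨hlen w, htake w, ?_⟩
    rw [getD_concat_lt P w hlt]
    rw [getD_concat_lt P a hlt] at hg1
    exact hg1

lemma interval_q (P : List ℝ) (a : ℝ) (c d : List ℝ) (hcF : IsFeather c)
    (h1 : flt c (P ++ [a] ++ [a])) (h2 : flt (P ++ [a] ++ [a]) d) :
    ∃ L, L < a ∧ ∀ w, L < w → w < a → flt c (P ++ [w]) ∧ flt (P ++ [w]) d := by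
  obtain ⟨C, γ, rfl, -, hCle⟩ := hcF
  rw [flt_concat_iff] at h1
  rw [flt_concat_iff] at h2
  obtain ⟨hl1, ht1, hg1⟩ := h1
  obtain ⟨hl2, ht2, hg2⟩ := h2
  have hlen2 : P.length + 1 < d.length := by simpa using hl2
  have htd : d.take (P.length + 1) = P ++ [a] := by simpa using ht2
  have hgd : a < d.getD (P.length + 1) 0 := by simpa using hg2
  have hdP : d.take P.length = P := by
    have h' : (d.take (P.length + 1)).take P.length = d.take P.length := by
      rw [List.take_take]; congr 1; omega
    rw [htd] at h'
    rw [← h', take_concat_le P a le_rfl, List.take_length]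
  have hdg : d.getD P.length 0 = a := by
    have h' : (d.take (P.length + 1))[P.length]? = d[P.length]? := by
      rw [List.getElem?_take]; simp
    rw [htd] at h'
    rw [List.getD_eq_getElem?_getD, ← h']
    have : (P ++ [a])[P.length]? = some a := by
      rw [List.getElem?_append_right le_rfl]; simp
    rw [this]; rfl
  have hsecond : ∀ w, w < a → flt (P ++ [w]) d := by
    intro w hw
    rw [flt_concat_iff]
    exact ⟨by omega, hdP, by rw [hdg]; exact hw⟩
  have hCq : C.length ≤ P.length + 1 := by
    have := hl1; simp at this; omega
  rcases eq_or_lt_of_le hCq with heq | hlt'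
  · -- impossible: C = P ++ [a] and a ≤ γ < a
    exfalso
    have hC : C = P ++ [a] := by
      rw [← ht1, heq]
      have h5 : P.length + 1 ≤ (P ++ [a]).length := by simp
      rw [take_concat_le (P ++ [a]) a h5]
      exact List.take_of_length_le (by simp)
    have hγa : γ < a := by
      have h6 : (P ++ [a] ++ [a]).getD C.length 0 = a := by
        rw [heq]
        have := getD_concat_self (P ++ [a]) a
        simpa using this
      rwa [h6] at hg1
    have : a ≤ γ := by
      apply hCle
      rw [hC, List.getLast?_concat]
      rfl
    linarith
  · have hCP : C.length ≤ P.length := by omega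
    have hlen : ∀ w : ℝ, C.length < (P ++ [w]).length := by
      intro w; simpa [Nat.lt_succ_iff] using hCP
    have htake : ∀ w : ℝ, (P ++ [w]).take C.length = C := by
      intro w
      have hC' : C.length ≤ (P ++ [a]).length := by simp; omega
      rw [take_concat_le P w hCP, ← take_concat_le P a hCP,
        ← take_concat_le (P ++ [a]) a hC', ht1]
    have hg1' : γ < (P ++ [a]).getD C.length 0 := by
      rwa [getD_concat_lt (P ++ [a]) a (by simp; omega)] at hg1
    rcases eq_or_lt_of_le hCP with heq2 | hlt2
    · refine ⟨γ, ?_, fun w hw1 hw2 => ⟨?_, hsecond w hw2⟩⟩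
      · rw [heq2, getD_concat_self] at hg1'; exact hg1'
      · rw [flt_concat_iff]
        refine ⟨hlen w, htake w, ?_⟩
        rw [heq2, getD_concat_self]; exact hw1
    · refine ⟨a - 1, by linarith, fun w hw1 hw2 => ⟨?_, hsecond w hw2⟩⟩
      rw [flt_concat_iff]
      refine ⟨hlen w, htake w, ?_⟩
      rw [getD_concat_lt P w hlt2]
      rw [getD_concat_lt P a hlt2] at hg1'
      exact hg1'

lemma gen_open_key (a : ℝ) (P : List ℝ) (t : Feather)
    (H : ∀ c b : Feather, flt c.val t.val → flt t.val b.val →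
      ∃ L, L < a ∧ ∀ w, L < w → w < a → flt c.val (P ++ [w]) ∧ flt (P ++ [w]) b.val) :
    ∀ U : Set Feather,
      TopologicalSpace.GenerateOpen {S | ∃ a b : Feather, S = {x | a < x ∧ x < b}} U →
      t ∈ U →
      ∃ L, L < a ∧ ∀ w, L < w → w < a → ∀ h : IsFeather (P ++ [w]),
        (⟨P ++ [w], h⟩ : Feather) ∈ U := by
  intro U hU
  induction hU with
  | basic S hS =>
    intro htS
    obtain ⟨c, b, rfl⟩ := hS
    obtain ⟨h1, h2⟩ := htS
    obtain ⟨L, hLa, hL⟩ := H c b h1 h2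
    exact ⟨L, hLa, fun w hw1 hw2 _ => hL w hw1 hw2⟩
  | univ => exact fun _ => ⟨a - 1, by linarith, fun _ _ _ _ => trivial⟩
  | inter U V hU hV ihU ihV =>
    rintro ⟨htU, htV⟩
    obtain ⟨L1, hL1a, h1⟩ := ihU htU
    obtain ⟨L2, hL2a, h2⟩ := ihV htV
    exact ⟨max L1 L2, max_lt hL1a hL2a, fun w hw1 hw2 h =>
      ⟨h1 w (lt_of_le_of_lt (le_max_left _ _) hw1) hw2 h,
       h2 w (lt_of_le_of_lt (le_max_right _ _) hw1) hw2 h⟩⟩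
  | sUnion S hS ih =>
    rintro ⟨V, hVS, htV⟩
    obtain ⟨L, hLa, hL⟩ := ih V hVS htV
    exact ⟨L, hLa, fun w hw1 hw2 h => ⟨V, hVS, hL w hw1 hw2 h⟩⟩

theorem feather_twins_not_separated :
    (∀ (p : List ℝ) (hp : IsFeather p), p.Chain' (· < ·) →
      ∀ (a : ℝ), p.getLast? = some a →
      ∀ (hq : IsFeather (p ++ [a])),
      ¬ ∃ U V : Set Feather, @IsOpen _ featherTop U ∧ @IsOpen _ featherTop V ∧
        (⟨p, hp⟩ : Feather) ∈ U ∧ (⟨p ++ [a], hq⟩ : Feather) ∈ V ∧ Disjoint U V) ∧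
    ¬ @T2Space Feather featherTop := by
  have main : ∀ (p : List ℝ) (hp : IsFeather p), p.Chain' (· < ·) →
      ∀ (a : ℝ), p.getLast? = some a →
      ∀ (hq : IsFeather (p ++ [a])),
      ¬ ∃ U V : Set Feather, @IsOpen _ featherTop U ∧ @IsOpen _ featherTop V ∧
        (⟨p, hp⟩ : Feather) ∈ U ∧ (⟨p ++ [a], hq⟩ : Feather) ∈ V ∧ Disjoint U V := by
    intro p hp hchain a hlast hq
    rintro ⟨U, V, hU, hV, hpU, hqV, hdisj⟩
    have hne : p ≠ [] := by rintro rfl; simp at hlast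
    have ha : a = p.getLast hne := by
      rw [List.getLast?_eq_getLast hne] at hlast
      exact (Option.some_inj.mp hlast).symm
    have hpe : p = p.dropLast ++ [a] := by
      rw [ha, List.dropLast_append_getLast hne]
    set P := p.dropLast with hPdef
    have hchain' : List.Chain' (· < ·) (P ++ [a]) := hpe ▸ hchain
    rw [show List.Chain' (· < ·) (P ++ [a]) ↔ _ from List.isChain_append] at hchain'
    obtain ⟨hPchain, -, hPa⟩ := hchain'
    have hPa' : ∀ b ∈ P.getLast?, b < a := fun b hb => hPa b hb a (by simp)
    obtain ⟨L1, hL1a, h1⟩ :=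
      gen_open_key a P ⟨p, hp⟩
        (fun c b hcb hbb =>
          interval_p P a c.val b.val c.2 (by rw [← hpe]; exact hcb) (by rw [← hpe]; exact hbb))
        U hU hpU
    obtain ⟨L2, hL2a, h2⟩ :=
      gen_open_key a P ⟨p ++ [a], hq⟩
        (fun c d hcd hdd =>
          interval_q P a c.val d.val c.2 (by rw [← hpe]; exact hcd) (by rw [← hpe]; exact hdd))
        V hV hqV
    have hfe : ∃ w0, w0 < a ∧ ∀ w, w0 < w → w < a → IsFeather (P ++ [w]) := by
      rcases List.eq_nil_or_concat P with hPnil | ⟨P', b, hPc⟩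
      · exact ⟨a - 1, by linarith, fun w _ _ =>
          ⟨P, w, rfl, hPnil ▸ List.isChain_nil, by simp [hPnil]⟩⟩
      · have hb : b < a := hPa' b (by rw [hPc, List.concat_eq_append, List.getLast?_concat]; rfl)
        refine ⟨b, hb, fun w hw _ => ⟨P, w, rfl, hPchain, fun x hx => ?_⟩⟩
        rw [hPc, List.concat_eq_append, List.getLast?_concat] at hx
        obtain rfl := Option.some_inj.mp hx.symm
        exact hw.le
    obtain ⟨w0, hw0a, hfe⟩ := hfe
    set w := (max (max L1 L2) w0 + a) / 2 with hwdef
    have hwa : w < a := by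
      have h3 : max (max L1 L2) w0 < a := by
        apply max_lt (max_lt hL1a hL2a) hw0a
      rw [hwdef]; linarith
    have hwlb : max (max L1 L2) w0 < w := by
      have h3 : max (max L1 L2) w0 < a := max_lt (max_lt hL1a hL2a) hw0a
      rw [hwdef]; linarith
    have hwL1 : L1 < w := lt_of_le_of_lt (le_trans (le_max_left _ _) (le_max_left _ _)) hwlb
    have hwL2 : L2 < w := lt_of_le_of_lt (le_trans (le_max_right _ _) (le_max_left _ _)) hwlb
    have hww0 : w0 < w := lt_of_le_of_lt (le_max_right _ _) hwlb
    have hF : IsFeather (P ++ [w]) := hfe w hww0 hwa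
    exact Set.disjoint_left.mp hdisj (h1 w hwL1 hwa hF) (h2 w hwL2 hwa hF)
  refine ⟨main, fun ht2 => ?_⟩
  have h0 : IsFeather [(0:ℝ)] := ⟨[], 0, rfl, List.isChain_nil, by simp⟩
  have h00 : IsFeather ([(0:ℝ)] ++ [0]) := ⟨[0], 0, rfl, List.isChain_singleton _, by simp⟩
  have hne : (⟨[(0:ℝ)], h0⟩ : Feather) ≠ ⟨[(0:ℝ)] ++ [0], h00⟩ := by
    intro h
    have := congrArg Subtype.val h
    simp at this
  obtain ⟨U, V, hU, hV, hxU, hyV, hd⟩ := @t2_separation _ featherTop ht2 _ _ hne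
  exact main [0] h0 (List.isChain_singleton _) 0 rfl h00 ⟨U, V, hU, hV, hxU, hyV, hd⟩
end
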